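/- arXiv:2507.04924 — 2 statements merged into one kernel-verified Lean document; each statement's English description precedes it below -/
import Mathlib

section
/- Let N ≥ 1 be an integer, let H be a symmetric real N×N matrix, let η ∈ ℝ^N with ‖η‖ ≤ 1, and let e, r be real numbers with e > 1 and r ≥ 2. Then Σ_{i,j=1}^N H_{ij}² + (e+r−4)·‖Hη‖² + (e−2)(r−2)·⟨Hη, η⟩² ≥ σ·Σ_{i,j=1}^N H_{ij}², where σ = min{1, e−1}. -/
/-!
Write `T = ∑ᵢⱼ Hᵢⱼ²`, `A = ‖Hη‖²` and `B = ⟨Hη, η⟩²`. Cauchy–Schwarz and `‖η‖ ≤ 1` give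
`0 ≤ B ≤ A ≤ T`, and the inequality becomes a statement about these three numbers. For `e ≥ 2`
all coefficients are nonnegative. For `e ≤ 2` the excess over `(e - 1) T` regroups as
`(2 - e)(T - A) + (r - 2)(A - (2 - e) B)`, and `A - (2 - e) B ≥ (e - 1) A ≥ 0`.
-/

theorem Matrix.sum_mulVec_sq_le {m n : Type*} [Fintype m] [Fintype n]
    (A : Matrix m n ℝ) (x : n → ℝ) :
    ∑ i, A.mulVec x i ^ 2 ≤ (∑ i, ∑ j, A i j ^ 2) * ∑ j, x j ^ 2 := by
  rw [Finset.sum_mul]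
  exact Finset.sum_le_sum fun i _ => Finset.sum_mul_sq_le_sq_mul_sq _ (A i) x

theorem min_one_sub_one_mul_le_of_le_of_le {T A B e r : ℝ} (hB : 0 ≤ B) (hBA : B ≤ A)
    (hAT : A ≤ T) (he : 1 < e) (hr : 2 ≤ r) :
    min 1 (e - 1) * T ≤ T + (e + r - 4) * A + (e - 2) * (r - 2) * B := by
  rcases le_total e 2 with he2 | he2
  · rw [min_eq_right (by linarith)]
    have hAB : (e - 1) * A ≤ A - (2 - e) * B := by nlinarith
    nlinarith [mul_nonneg (sub_nonneg.2 he2) (sub_nonneg.2 hAT),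
      mul_le_mul_of_nonneg_left hAB (sub_nonneg.2 hr),
      mul_nonneg (mul_nonneg (sub_nonneg.2 hr) (sub_pos.2 he).le) (hB.trans hBA)]
  · rw [min_eq_left (by linarith)]
    nlinarith [mul_nonneg (by linarith : (0 : ℝ) ≤ e + r - 4) (hB.trans hBA),
      mul_nonneg (mul_nonneg (sub_nonneg.2 he2) (sub_nonneg.2 hr)) hB]

theorem stmt0_general (N : ℕ) (H : Matrix (Fin N) (Fin N) ℝ)
    (η : Fin N → ℝ) (hη : ∑ i, η i ^ 2 ≤ 1)
    (e r : ℝ) (he : 1 < e) (hr : 2 ≤ r) :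
    (∑ i, ∑ j, H i j ^ 2) + (e + r - 4) * (∑ i, (H.mulVec η i) ^ 2)
        + (e - 2) * (r - 2) * (∑ i, H.mulVec η i * η i) ^ 2
      ≥ min 1 (e - 1) * (∑ i, ∑ j, H i j ^ 2) := by
  have hT : 0 ≤ ∑ i, ∑ j, H i j ^ 2 :=
    Finset.sum_nonneg fun i _ => Finset.sum_nonneg fun j _ => sq_nonneg _
  have hA : 0 ≤ ∑ i, H.mulVec η i ^ 2 := Finset.sum_nonneg fun i _ => sq_nonneg _
  have hAT : ∑ i, H.mulVec η i ^ 2 ≤ ∑ i, ∑ j, H i j ^ 2 :=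
    (H.sum_mulVec_sq_le η).trans (mul_le_of_le_one_right hT hη)
  have hBA : (∑ i, H.mulVec η i * η i) ^ 2 ≤ ∑ i, H.mulVec η i ^ 2 :=
    (Finset.sum_mul_sq_le_sq_mul_sq _ _ _).trans (mul_le_of_le_one_right hA hη)
  exact min_one_sub_one_mul_le_of_le_of_le (sq_nonneg _) hBA hAT he hr

/-- Pointwise algebraic inequality (Proposition `pro:pointwise`):
for a symmetric `N × N` real matrix `H`, a vector `η` with Euclidean norm at most `1`,
and reals `e > 1`, `r ≥ 2`,
`trace(H²) + (e+r-4)‖Hη‖² + (e-2)(r-2)⟨Hη,η⟩² ≥ min{1, e-1} · trace(H²)`,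
where `trace(H²) = ∑ᵢⱼ Hᵢⱼ²`, `‖Hη‖² = ∑ᵢ (Hη)ᵢ²` and `⟨Hη,η⟩ = ∑ᵢ (Hη)ᵢ ηᵢ`. -/
theorem stmt0 (N : ℕ) (hN : 1 ≤ N) (H : Matrix (Fin N) (Fin N) ℝ) (hH : H.IsSymm)
    (η : Fin N → ℝ) (hη : ∑ i, η i ^ 2 ≤ 1)
    (e r : ℝ) (he : 1 < e) (hr : 2 ≤ r) :
    (∑ i, ∑ j, H i j ^ 2) + (e + r - 4) * (∑ i, (H.mulVec η i) ^ 2)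
        + (e - 2) * (r - 2) * (∑ i, H.mulVec η i * η i) ^ 2
      ≥ min 1 (e - 1) * (∑ i, ∑ j, H i j ^ 2) :=
  stmt0_general N H η hη e r he hr
end

section
/- Let N ≥ 1 be an integer, ε ∈ (0,1), α ∈ (0,1], and let Q ⊆ ℝ^N × ℝ. Suppose p, q : Q → ℝ take values in [m, M] with 1 ≤ m ≤ M and are Lipschitz with constant L with respect to the distance |x₁−x₂| + |t₁−t₂|, and suppose a, b : Q → [0, K] satisfy the parabolic Hölder condition |a(z₁)−a(z₂)| ≤ K₀·(|x₁−x₂|^α + |t₁−t₂|^{α/2}) for all z₁ = (x₁,t₁), z₂ = (x₂,t₂) ∈ Q, and likewise for b. Then there exists a constant C > 0, depending only on ε, α, L, K, K₀, m, M, N, such that for all z₁, z₂ ∈ Q with |x₁−x₂| + |t₁−t₂| ≤ 1 and all ξ ∈ ℝ^N: ‖𝓕_ε(z₁,ξ)ξ − 𝓕_ε(z₂,ξ)ξ‖ ≤ C·(|x₁−x₂|^α + |t₁−t₂|^{α/2})·(1 + log(1+‖ξ‖²))·(1 + ‖ξ‖^{M−1}). -/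
/-!
Each phase of the flux has the form `(a + ε) s ^ ((p - 2) / 2) ξ` with `s = ε² + ‖ξ‖² ≥ ε²`.
Splitting the difference of a phase at `z₁` and `z₂` as
`(a₁ - a₂) s ^ r₁ + (a₂ + ε) (s ^ r₁ - s ^ r₂)`, the first term is controlled by the Hölder
continuity of `a`, the second by the mean value theorem for `r ↦ s ^ r`, which costs
`|r₁ - r₂| |log s|` with `|log s| ≤ 2 (|log ε| + log (1 + ‖ξ‖²))`; this is where the
logarithmic factor comes from. Both terms carry `s ^ ((p - 2) / 2) ‖ξ‖ ≤ (1 + ‖ξ‖) ^ (M - 1)`.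
For points at distance at most one, `|x₁ - x₂| + |t₁ - t₂| ≤ |x₁ - x₂| ^ α + |t₁ - t₂| ^ (α / 2)`,
so the Lipschitz bound on the exponents is dominated by the parabolic Hölder distance.
-/

open Real

namespace Real

lemma abs_exp_sub_exp_le (x y : ℝ) : |exp x - exp y| ≤ |x - y| * max (exp x) (exp y) := by
  wlog hyx : y ≤ x generalizing x y
  · rw [abs_sub_comm, abs_sub_comm x, max_comm]
    exact this y x (le_of_not_ge hyx)
  have hfactor : exp x - exp y = exp x * (1 - exp (y - x)) := by
    rw [mul_sub, mul_one, ← exp_add, add_sub_cancel]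
  have hlin : 1 - exp (y - x) ≤ x - y := by linarith [add_one_le_exp (y - x)]
  rw [abs_of_nonneg (sub_nonneg.2 (exp_le_exp.2 hyx)), abs_of_nonneg (sub_nonneg.2 hyx),
    max_eq_left (exp_le_exp.2 hyx), hfactor, mul_comm]
  exact mul_le_mul_of_nonneg_right hlin (exp_pos x).le

lemma abs_rpow_sub_rpow_le {s : ℝ} (hs : 0 < s) (r₁ r₂ : ℝ) :
    |s ^ r₁ - s ^ r₂| ≤ |r₁ - r₂| * |log s| * max (s ^ r₁) (s ^ r₂) := by
  simpa only [rpow_def_of_pos hs, ← mul_sub, abs_mul, mul_comm |log s|]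
    using abs_exp_sub_exp_le (log s * r₁) (log s * r₂)

lemma add_rpow_le_two_rpow_mul_rpow_add_rpow {a b p : ℝ} (ha : 0 ≤ a) (hb : 0 ≤ b)
    (hp : 0 ≤ p) : (a + b) ^ p ≤ 2 ^ p * (a ^ p + b ^ p) := calc
  (a + b) ^ p ≤ (2 * max a b) ^ p := by
    rw [two_mul]; gcongr <;> simp
  _ = 2 ^ p * max a b ^ p := mul_rpow zero_le_two (le_max_of_le_left ha)
  _ = 2 ^ p * max (a ^ p) (b ^ p) := by rw [rpow_max ha hb hp]
  _ ≤ 2 ^ p * (a ^ p + b ^ p) := by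
    gcongr; exact max_le_add_of_nonneg (rpow_nonneg ha p) (rpow_nonneg hb p)

end Real

lemma add_le_rpow_add_rpow_half {x τ α : ℝ} (hx : 0 ≤ x) (hτ : 0 ≤ τ) (hxτ : x + τ ≤ 1)
    (hα : α ≤ 1) : x + τ ≤ x ^ α + τ ^ (α / 2) :=
  add_le_add (self_le_rpow_of_le_one hx (by linarith) hα)
    (self_le_rpow_of_le_one hτ (by linarith) (by linarith))

lemma rpow_mul_le_rpow_add_half {s t r : ℝ} (hs : 0 < s) (hts : t ^ 2 ≤ s) :
    s ^ r * t ≤ s ^ (r + 1 / 2) := by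
  have hsqrt : t ≤ s ^ (1 / 2 : ℝ) := by
    rw [← sqrt_eq_rpow]; exact le_sqrt_of_sq_le hts
  rw [rpow_add hs]
  exact mul_le_mul_of_nonneg_left hsqrt (rpow_nonneg hs.le r)

lemma sq_add_sq_rpow_mul_le {ε t p M : ℝ} (hε0 : 0 < ε) (hε1 : ε ≤ 1) (ht : 0 ≤ t) (hp1 : 1 ≤ p)
    (hpM : p ≤ M) :
    (ε ^ 2 + t ^ 2) ^ ((p - 2) / 2) * t ≤ 2 ^ (M - 1) * (1 + t ^ (M - 1)) := calc
  (ε ^ 2 + t ^ 2) ^ ((p - 2) / 2) * t ≤ (ε ^ 2 + t ^ 2) ^ ((p - 2) / 2 + 1 / 2) :=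
    rpow_mul_le_rpow_add_half (by positivity) (le_add_of_nonneg_left (sq_nonneg ε))
  _ = (ε ^ 2 + t ^ 2) ^ ((p - 1) / 2) := by ring_nf
  _ ≤ (1 + t ^ 2) ^ ((p - 1) / 2) := by
    gcongr; nlinarith
  _ ≤ (1 + t ^ 2) ^ ((M - 1) / 2) := by
    gcongr
    · exact le_add_of_nonneg_right (sq_nonneg t)
  _ ≤ ((1 + t) ^ 2) ^ ((M - 1) / 2) := by
    gcongr
    · linarith
    · nlinarith
  _ = (1 + t) ^ (M - 1) := by
    rw [← rpow_natCast, ← rpow_mul (by positivity)]; congr 1; push_cast; ring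
  _ ≤ 2 ^ (M - 1) * (1 + t ^ (M - 1)) := by
    simpa only [one_rpow] using add_rpow_le_two_rpow_mul_rpow_add_rpow zero_le_one ht
      (by linarith : (0 : ℝ) ≤ M - 1)

lemma abs_log_sq_add_sq_le {ε t : ℝ} (hε0 : 0 < ε) (hε1 : ε ≤ 1) :
    |log (ε ^ 2 + t ^ 2)| ≤ 2 * (|log ε| + log (1 + t ^ 2)) := by
  have hlower : 2 * log ε ≤ log (ε ^ 2 + t ^ 2) := by
    rw [← Nat.cast_ofNat, ← log_pow]; gcongr; exact le_add_of_nonneg_right (sq_nonneg t)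
  have hupper : log (ε ^ 2 + t ^ 2) ≤ log (1 + t ^ 2) := by
    gcongr; nlinarith
  have hG : 0 ≤ log (1 + t ^ 2) := log_nonneg (le_add_of_nonneg_right (sq_nonneg t))
  rw [abs_le]
  constructor <;> linarith [neg_abs_le (log ε), abs_nonneg (log ε)]

noncomputable def regPhase (ε a p t : ℝ) : ℝ := (a + ε) * (ε ^ 2 + t ^ 2) ^ ((p - 2) / 2)

lemma abs_regPhase_sub_mul_le {ε a₁ a₂ p₁ p₂ t M K : ℝ} (hε0 : 0 < ε) (hε1 : ε ≤ 1)
    (ht : 0 ≤ t) (hp₁ : p₁ ∈ Set.Icc 1 M) (hp₂ : p₂ ∈ Set.Icc 1 M) (ha₂ : a₂ ∈ Set.Icc 0 K) :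
    |regPhase ε a₁ p₁ t - regPhase ε a₂ p₂ t| * t ≤
      (|a₁ - a₂| + (K + 1) * |p₁ - p₂| * (|log ε| + log (1 + t ^ 2)))
        * (2 ^ (M - 1) * (1 + t ^ (M - 1))) := by
  set s := ε ^ 2 + t ^ 2 with hs_def
  set E := 2 ^ (M - 1) * (1 + t ^ (M - 1))
  have hs : 0 < s := by positivity
  have hgrowth₁ : s ^ ((p₁ - 2) / 2) * t ≤ E := sq_add_sq_rpow_mul_le hε0 hε1 ht hp₁.1 hp₁.2
  have hgrowth₂ : s ^ ((p₂ - 2) / 2) * t ≤ E := sq_add_sq_rpow_mul_le hε0 hε1 ht hp₂.1 hp₂.2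
  have hexponent : |(p₁ - 2) / 2 - (p₂ - 2) / 2| * |log s|
      ≤ |p₁ - p₂| * (|log ε| + log (1 + t ^ 2)) := calc
    _ ≤ |p₁ - p₂| / 2 * (2 * (|log ε| + log (1 + t ^ 2))) := by
      rw [show (p₁ - 2) / 2 - (p₂ - 2) / 2 = (p₁ - p₂) / 2 by ring, abs_div, abs_two]
      gcongr
      exact abs_log_sq_add_sq_le hε0 hε1
    _ = |p₁ - p₂| * (|log ε| + log (1 + t ^ 2)) := by ring
  have hdiff : |s ^ ((p₁ - 2) / 2) - s ^ ((p₂ - 2) / 2)| * t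
      ≤ |p₁ - p₂| * (|log ε| + log (1 + t ^ 2)) * E := calc
    _ ≤ |(p₁ - 2) / 2 - (p₂ - 2) / 2| * |log s|
          * (max (s ^ ((p₁ - 2) / 2)) (s ^ ((p₂ - 2) / 2)) * t) := by
      rw [← mul_assoc]; gcongr; exact abs_rpow_sub_rpow_le hs _ _
    _ ≤ |p₁ - p₂| * (|log ε| + log (1 + t ^ 2)) * E := by
      rw [max_mul_of_nonneg _ _ ht]
      exact mul_le_mul hexponent (max_le hgrowth₁ hgrowth₂) (by positivity)
        ((mul_nonneg (abs_nonneg _) (abs_nonneg _)).trans hexponent)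
  calc |regPhase ε a₁ p₁ t - regPhase ε a₂ p₂ t| * t
      = |(a₁ - a₂) * s ^ ((p₁ - 2) / 2)
          + (a₂ + ε) * (s ^ ((p₁ - 2) / 2) - s ^ ((p₂ - 2) / 2))| * t := by
        unfold regPhase; rw [← hs_def]; ring_nf
    _ ≤ (|a₁ - a₂| * s ^ ((p₁ - 2) / 2)
          + (a₂ + ε) * |s ^ ((p₁ - 2) / 2) - s ^ ((p₂ - 2) / 2)|) * t := by
        gcongr
        refine (abs_add_le _ _).trans_eq ?_
        rw [abs_mul, abs_mul, abs_of_nonneg (rpow_nonneg hs.le _),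
          abs_of_nonneg (by linarith [ha₂.1] : 0 ≤ a₂ + ε)]
    _ = |a₁ - a₂| * (s ^ ((p₁ - 2) / 2) * t)
          + (a₂ + ε) * (|s ^ ((p₁ - 2) / 2) - s ^ ((p₂ - 2) / 2)| * t) := by ring
    _ ≤ |a₁ - a₂| * E + (K + 1) * (|p₁ - p₂| * (|log ε| + log (1 + t ^ 2)) * E) := by
        gcongr <;> linarith [ha₂.1, ha₂.2]
    _ = _ := by ring

lemma abs_regPhase_sub_mul_le_of_holder {ε a₁ a₂ p₁ p₂ t M K K₀ L d D : ℝ} (hε0 : 0 < ε)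
    (hε1 : ε ≤ 1) (ht : 0 ≤ t) (hp₁ : p₁ ∈ Set.Icc 1 M) (hp₂ : p₂ ∈ Set.Icc 1 M)
    (ha₂ : a₂ ∈ Set.Icc 0 K) (hd : 0 ≤ d) (hdD : d ≤ D) (had : |a₁ - a₂| ≤ K₀ * D)
    (hpd : |p₁ - p₂| ≤ L * d) :
    |regPhase ε a₁ p₁ t - regPhase ε a₂ p₂ t| * t ≤
      (|K₀| + (|K| + 1) * |L| * (|log ε| + 1)) * 2 ^ (M - 1)
        * D * (1 + log (1 + t ^ 2)) * (1 + t ^ (M - 1)) := by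
  set A := |log ε|
  set G := log (1 + t ^ 2)
  have hA : 0 ≤ A := abs_nonneg _
  have hG : 0 ≤ G := log_nonneg (le_add_of_nonneg_right (sq_nonneg t))
  have hD : 0 ≤ D := hd.trans hdD
  have had' : |a₁ - a₂| ≤ |K₀| * D := had.trans (by gcongr; exact le_abs_self K₀)
  have hpd' : |p₁ - p₂| ≤ |L| * D := hpd.trans (by gcongr; exact le_abs_self L)
  have hcoeff : |a₁ - a₂| + (|K| + 1) * |p₁ - p₂| * (A + G)
      ≤ (|K₀| + (|K| + 1) * |L| * (A + 1)) * (1 + G) * D := by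
    have hAG : A + G ≤ (A + 1) * (1 + G) := by nlinarith
    calc |a₁ - a₂| + (|K| + 1) * |p₁ - p₂| * (A + G)
        ≤ |K₀| * D + (|K| + 1) * (|L| * D) * ((A + 1) * (1 + G)) := by gcongr
      _ ≤ |K₀| * D * (1 + G) + (|K| + 1) * (|L| * D) * ((A + 1) * (1 + G)) := by
        nlinarith [mul_nonneg (mul_nonneg (abs_nonneg K₀) hD) hG]
      _ = (|K₀| + (|K| + 1) * |L| * (A + 1)) * (1 + G) * D := by ring
  have hE : 0 ≤ 2 ^ (M - 1) * (1 + t ^ (M - 1)) := by positivity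
  calc |regPhase ε a₁ p₁ t - regPhase ε a₂ p₂ t| * t
      ≤ (|a₁ - a₂| + (|K| + 1) * |p₁ - p₂| * (A + G)) * (2 ^ (M - 1) * (1 + t ^ (M - 1))) :=
        abs_regPhase_sub_mul_le hε0 hε1 ht hp₁ hp₂ ⟨ha₂.1, ha₂.2.trans (le_abs_self K)⟩
    _ ≤ ((|K₀| + (|K| + 1) * |L| * (A + 1)) * (1 + G) * D)
          * (2 ^ (M - 1) * (1 + t ^ (M - 1))) := by
        gcongr
    _ = _ := by ring

lemma norm_add_smul_sub_add_smul_le {E : Type*} [SeminormedAddCommGroup E] [NormedSpace ℝ E]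
    (x₁ y₁ x₂ y₂ : ℝ) (v : E) :
    ‖(x₁ + y₁) • v - (x₂ + y₂) • v‖ ≤ |x₁ - x₂| * ‖v‖ + |y₁ - y₂| * ‖v‖ := by
  rw [← sub_smul, norm_smul, norm_eq_abs, add_sub_add_comm, ← add_mul]
  gcongr
  exact abs_add_le _ _

theorem stmt1_general (N : ℕ) (ε α : ℝ)
    (hε : ε ∈ Set.Ioo (0:ℝ) 1) (hα : α ∈ Set.Ioc (0:ℝ) 1)
    (Q : Set (EuclideanSpace ℝ (Fin N) × ℝ))
    (p q a b : EuclideanSpace ℝ (Fin N) × ℝ → ℝ)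
    (m M L K K₀ : ℝ) (hm : 1 ≤ m)
    (hp : ∀ z ∈ Q, p z ∈ Set.Icc m M) (hq : ∀ z ∈ Q, q z ∈ Set.Icc m M)
    (hpL : ∀ z₁ ∈ Q, ∀ z₂ ∈ Q, |p z₁ - p z₂| ≤ L * (‖z₁.1 - z₂.1‖ + |z₁.2 - z₂.2|))
    (hqL : ∀ z₁ ∈ Q, ∀ z₂ ∈ Q, |q z₁ - q z₂| ≤ L * (‖z₁.1 - z₂.1‖ + |z₁.2 - z₂.2|))
    (ha : ∀ z ∈ Q, a z ∈ Set.Icc (0:ℝ) K) (hb : ∀ z ∈ Q, b z ∈ Set.Icc (0:ℝ) K)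
    (haH : ∀ z₁ ∈ Q, ∀ z₂ ∈ Q,
      |a z₁ - a z₂| ≤ K₀ * (‖z₁.1 - z₂.1‖ ^ α + |z₁.2 - z₂.2| ^ (α / 2)))
    (hbH : ∀ z₁ ∈ Q, ∀ z₂ ∈ Q,
      |b z₁ - b z₂| ≤ K₀ * (‖z₁.1 - z₂.1‖ ^ α + |z₁.2 - z₂.2| ^ (α / 2))) :
    ∃ C > 0, ∀ z₁ ∈ Q, ∀ z₂ ∈ Q, ‖z₁.1 - z₂.1‖ + |z₁.2 - z₂.2| ≤ 1 →
      ∀ ξ : EuclideanSpace ℝ (Fin N),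
        ‖(((a z₁ + ε) * (ε ^ 2 + ‖ξ‖ ^ 2) ^ ((p z₁ - 2) / 2)
              + (b z₁ + ε) * (ε ^ 2 + ‖ξ‖ ^ 2) ^ ((q z₁ - 2) / 2)) • ξ)
          - (((a z₂ + ε) * (ε ^ 2 + ‖ξ‖ ^ 2) ^ ((p z₂ - 2) / 2)
              + (b z₂ + ε) * (ε ^ 2 + ‖ξ‖ ^ 2) ^ ((q z₂ - 2) / 2)) • ξ)‖
        ≤ C * (‖z₁.1 - z₂.1‖ ^ α + |z₁.2 - z₂.2| ^ (α / 2))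
            * (1 + Real.log (1 + ‖ξ‖ ^ 2)) * (1 + ‖ξ‖ ^ (M - 1)) := by
  obtain ⟨hε0, hε1⟩ := hε
  set c := (|K₀| + (|K| + 1) * |L| * (|log ε| + 1)) * 2 ^ (M - 1)
  refine ⟨2 * c + 1, by positivity, fun z₁ hz₁ z₂ hz₂ hdist ξ => ?_⟩
  set D := ‖z₁.1 - z₂.1‖ ^ α + |z₁.2 - z₂.2| ^ (α / 2)
  have hd : 0 ≤ ‖z₁.1 - z₂.1‖ + |z₁.2 - z₂.2| := by positivity
  have hdD : ‖z₁.1 - z₂.1‖ + |z₁.2 - z₂.2| ≤ D :=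
    add_le_rpow_add_rpow_half (norm_nonneg _) (abs_nonneg _) hdist hα.2
  have hpa := abs_regPhase_sub_mul_le_of_holder hε0 hε1.le (norm_nonneg ξ)
    (Set.Icc_subset_Icc_left hm (hp z₁ hz₁)) (Set.Icc_subset_Icc_left hm (hp z₂ hz₂))
    (ha z₂ hz₂) hd hdD (haH z₁ hz₁ z₂ hz₂) (hpL z₁ hz₁ z₂ hz₂)
  have hqb := abs_regPhase_sub_mul_le_of_holder hε0 hε1.le (norm_nonneg ξ)
    (Set.Icc_subset_Icc_left hm (hq z₁ hz₁)) (Set.Icc_subset_Icc_left hm (hq z₂ hz₂))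
    (hb z₂ hz₂) hd hdD (hbH z₁ hz₁ z₂ hz₂) (hqL z₁ hz₁ z₂ hz₂)
  have hX : 0 ≤ D * (1 + log (1 + ‖ξ‖ ^ 2)) * (1 + ‖ξ‖ ^ (M - 1)) := by
    have := log_nonneg (le_add_of_nonneg_right (sq_nonneg ‖ξ‖))
    positivity
  calc _ ≤ |regPhase ε (a z₁) (p z₁) ‖ξ‖ - regPhase ε (a z₂) (p z₂) ‖ξ‖| * ‖ξ‖
        + |regPhase ε (b z₁) (q z₁) ‖ξ‖ - regPhase ε (b z₂) (q z₂) ‖ξ‖| * ‖ξ‖ :=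
      norm_add_smul_sub_add_smul_le _ _ _ _ ξ
    _ ≤ c * D * (1 + log (1 + ‖ξ‖ ^ 2)) * (1 + ‖ξ‖ ^ (M - 1))
        + c * D * (1 + log (1 + ‖ξ‖ ^ 2)) * (1 + ‖ξ‖ ^ (M - 1)) := add_le_add hpa hqb
    _ ≤ (2 * c + 1) * D * (1 + log (1 + ‖ξ‖ ^ 2)) * (1 + ‖ξ‖ ^ (M - 1)) := by
      nlinarith

/-- Continuity in `z = (x,t)` of the regularized double-phase flux
`𝓕_ε(z,ξ)ξ = (a(z)+ε)(ε²+‖ξ‖²)^((p(z)-2)/2) ξ + (b(z)+ε)(ε²+‖ξ‖²)^((q(z)-2)/2) ξ`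
(structure condition (iii) verified in Section 3 of the paper). -/
theorem stmt1 (N : ℕ) (hN : 1 ≤ N) (ε α : ℝ)
    (hε : ε ∈ Set.Ioo (0:ℝ) 1) (hα : α ∈ Set.Ioc (0:ℝ) 1)
    (Q : Set (EuclideanSpace ℝ (Fin N) × ℝ))
    (p q a b : EuclideanSpace ℝ (Fin N) × ℝ → ℝ)
    (m M L K K₀ : ℝ) (hm : 1 ≤ m) (hmM : m ≤ M)
    (hp : ∀ z ∈ Q, p z ∈ Set.Icc m M) (hq : ∀ z ∈ Q, q z ∈ Set.Icc m M)
    (hpL : ∀ z₁ ∈ Q, ∀ z₂ ∈ Q, |p z₁ - p z₂| ≤ L * (‖z₁.1 - z₂.1‖ + |z₁.2 - z₂.2|))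
    (hqL : ∀ z₁ ∈ Q, ∀ z₂ ∈ Q, |q z₁ - q z₂| ≤ L * (‖z₁.1 - z₂.1‖ + |z₁.2 - z₂.2|))
    (ha : ∀ z ∈ Q, a z ∈ Set.Icc (0:ℝ) K) (hb : ∀ z ∈ Q, b z ∈ Set.Icc (0:ℝ) K)
    (haH : ∀ z₁ ∈ Q, ∀ z₂ ∈ Q,
      |a z₁ - a z₂| ≤ K₀ * (‖z₁.1 - z₂.1‖ ^ α + |z₁.2 - z₂.2| ^ (α / 2)))
    (hbH : ∀ z₁ ∈ Q, ∀ z₂ ∈ Q,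
      |b z₁ - b z₂| ≤ K₀ * (‖z₁.1 - z₂.1‖ ^ α + |z₁.2 - z₂.2| ^ (α / 2))) :
    ∃ C > 0, ∀ z₁ ∈ Q, ∀ z₂ ∈ Q, ‖z₁.1 - z₂.1‖ + |z₁.2 - z₂.2| ≤ 1 →
      ∀ ξ : EuclideanSpace ℝ (Fin N),
        ‖(((a z₁ + ε) * (ε ^ 2 + ‖ξ‖ ^ 2) ^ ((p z₁ - 2) / 2)
              + (b z₁ + ε) * (ε ^ 2 + ‖ξ‖ ^ 2) ^ ((q z₁ - 2) / 2)) • ξ)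
          - (((a z₂ + ε) * (ε ^ 2 + ‖ξ‖ ^ 2) ^ ((p z₂ - 2) / 2)
              + (b z₂ + ε) * (ε ^ 2 + ‖ξ‖ ^ 2) ^ ((q z₂ - 2) / 2)) • ξ)‖
        ≤ C * (‖z₁.1 - z₂.1‖ ^ α + |z₁.2 - z₂.2| ^ (α / 2))
            * (1 + Real.log (1 + ‖ξ‖ ^ 2)) * (1 + ‖ξ‖ ^ (M - 1)) :=
  stmt1_general N ε α hε hα Q p q a b m M L K K₀ hm hp hq hpL hqL ha hb haH hbH
end
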